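/- arXiv:0807.3756 — 2 statements merged into one kernel-verified Lean document; each statement's English description precedes it below -/
import Mathlib

section
/- Let X be a compact Hausdorff space, X₀ and X₁ two disjoint closed subsets of X with nonempty interiors, and S ⊆ X a set such that every continuum C ⊆ X meeting both X₀ and X₁ meets S. Then there exist nonempty open sets U_k, V_k with closure(V_k) ⊆ U_k ⊆ X_k for k = 0, 1, such that every continuum C meeting both closure(V₀) and closure(V₁) meets S \ (U₀ ∪ U₁). -/
/-!
Shrink `Xₖ` to open sets `Uₖ` with `closure Uₖ ⊆ Xₖ`, and `Uₖ` to `Vₖ` with `closure Vₖ ⊆ Uₖ`.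
A continuum `C` meeting `closure V₀ ⊆ U₀` and `closure V₁ ⊆ U₁` is cut down twice by boundary
bumping: the component of a point of `C ∩ U₁` in `C \ U₀` is a continuum reaching `closure U₀ ⊆ X₀`,
and inside it the component of a point of `closure U₀` in the complement of `U₁` reaches
`closure U₁ ⊆ X₁`.
The resulting continuum joins `X₀` to `X₁` while avoiding `U₀ ∪ U₁`, so it meets `S \ (U₀ ∪ U₁)`.
-/

open Set

section

variable {X : Type*} [TopologicalSpace X]

def CutsBetween (S A B : Set X) : Prop :=
  ∀ C : Set X, IsCompact C → IsConnected C → (C ∩ A).Nonempty → (C ∩ B).Nonempty →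
    (C ∩ S).Nonempty

theorem CutsBetween.mono {S A B A' B' : Set X} (h : CutsBetween S A B) (hA : A' ⊆ A)
    (hB : B' ⊆ B) : CutsBetween S A' B' := fun C hCc hC hCA hCB =>
  h C hCc hC (hCA.mono (inter_subset_inter_right C hA)) (hCB.mono (inter_subset_inter_right C hB))

theorem exists_isClopen_mem_subset_of_connectedComponent_subset [CompactSpace X] [T2Space X]
    {x : X} {W : Set X} (hW : IsOpen W) (h : connectedComponent x ⊆ W) :
    ∃ Z : Set X, IsClopen Z ∧ x ∈ Z ∧ Z ⊆ W := by
  have hempty : Wᶜ ∩ ⋂ s : { s : Set X // IsClopen s ∧ x ∈ s }, (s : Set X) = ∅ := by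
    rwa [← connectedComponent_eq_iInter_isClopen, ← disjoint_iff_inter_eq_empty,
      disjoint_compl_left_iff_subset]
  obtain ⟨t, ht⟩ := hW.isClosed_compl.isCompact.elim_finite_subfamily_closed
    (fun s : { s : Set X // IsClopen s ∧ x ∈ s } => (s : Set X)) (fun s => s.2.1.1) hempty
  refine ⟨⋂ s ∈ t, (s : Set X), isClopen_biInter_finset fun s _ => s.2.1,
    mem_iInter₂.2 fun s _ => s.2.2, ?_⟩
  rwa [← disjoint_compl_left_iff_subset, disjoint_iff_inter_eq_empty]

theorem IsCompact.isCompact_connectedComponentIn {F : Set X} (hF : IsCompact F) (x : X) :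
    IsCompact (connectedComponentIn F x) := by
  by_cases hx : x ∈ F
  · have : CompactSpace F := isCompact_iff_compactSpace.mp hF
    rw [connectedComponentIn_eq_image hx]
    exact isClosed_connectedComponent.isCompact.image continuous_subtype_val
  · rw [connectedComponentIn_eq_empty hx]
    exact isCompact_empty

theorem IsCompact.exists_isClosed_eq_inter_isOpen_of_connectedComponentIn_subset [T2Space X]
    {F W : Set X} (hF : IsCompact F) (hW : IsOpen W) {x : X} (hx : x ∈ F)
    (h : connectedComponentIn F x ⊆ W) :
    ∃ A O : Set X, IsClosed A ∧ IsOpen O ∧ A = F ∩ O ∧ x ∈ A ∧ A ⊆ W := by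
  have : CompactSpace F := isCompact_iff_compactSpace.mp hF
  have hsub : connectedComponent (⟨x, hx⟩ : F) ⊆ Subtype.val ⁻¹' W := by
    rw [← image_subset_iff, ← connectedComponentIn_eq_image hx]
    exact h
  obtain ⟨Z, hZ, hxZ, hZW⟩ := exists_isClopen_mem_subset_of_connectedComponent_subset
    (hW.preimage continuous_subtype_val) hsub
  obtain ⟨O, hO, rfl⟩ := isOpen_induced_iff.mp hZ.isOpen
  exact ⟨F ∩ O, O, Subtype.image_preimage_coe F O ▸
    (hZ.isClosed.isCompact.image continuous_subtype_val).isClosed, hO, rfl, ⟨hx, hxZ⟩,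
    Subtype.image_preimage_coe F O ▸ image_subset_iff.2 hZW⟩

/-- Boundary bumping. -/
theorem IsConnected.connectedComponentIn_diff_inter_closure_nonempty [T2Space X] {C U : Set X}
    (hC : IsConnected C) (hCc : IsCompact C) (hU : IsOpen U) (hCU : (C ∩ U).Nonempty) {p : X}
    (hp : p ∈ C \ U) : (connectedComponentIn (C \ U) p ∩ closure U).Nonempty := by
  by_contra hcon
  rw [not_nonempty_iff_eq_empty, ← disjoint_iff_inter_eq_empty, ← subset_compl_iff_disjoint_right]
    at hcon
  obtain ⟨A, O, hA, hO, rfl, hpA, hAU⟩ :=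
    (hCc.diff hU).exists_isClosed_eq_inter_isOpen_of_connectedComponentIn_subset
      isClosed_closure.isOpen_compl hp hcon
  -- `A` is clopen in `C`: its complement there is `C ∩ B` with `B` closed.
  set B := (O ∩ (closure U)ᶜ)ᶜ
  have hcover : C ⊆ (C \ U ∩ O) ∪ B := fun x hxC => by
    by_cases hx : x ∈ O ∩ (closure U)ᶜ
    · exact Or.inl ⟨⟨hxC, fun hxU => hx.2 (subset_closure hxU)⟩, hx.1⟩
    · exact Or.inr hx
  have hdisj : C ∩ ((C \ U ∩ O) ∩ B) = ∅ :=
    eq_empty_iff_forall_notMem.2 fun x ⟨_, hxA, hxB⟩ => hxB ⟨hxA.2, hAU hxA⟩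
  rcases isPreconnected_iff_subset_of_disjoint_closed.1 hC.isPreconnected _ B hA
      (hO.inter isClosed_closure.isOpen_compl).isClosed_compl hcover hdisj with hCA | hCB
  · obtain ⟨q, hqC, hqU⟩ := hCU
    exact (hCA hqC).1.2 hqU
  · exact hCB hp.1 ⟨hpA.2, hAU hpA⟩

theorem IsConnected.exists_isConnected_subset_diff_inter_closure_nonempty [T2Space X]
    {C U : Set X} (hC : IsConnected C) (hCc : IsCompact C) (hU : IsOpen U)
    (hCU : (C ∩ U).Nonempty) {p : X} (hp : p ∈ C \ U) :
    ∃ K : Set X, IsCompact K ∧ IsConnected K ∧ p ∈ K ∧ K ⊆ C \ U ∧ (K ∩ closure U).Nonempty :=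
  ⟨connectedComponentIn (C \ U) p, (hCc.diff hU).isCompact_connectedComponentIn p,
    isConnected_connectedComponentIn_iff.2 hp, mem_connectedComponentIn hp,
    connectedComponentIn_subset _ _,
    hC.connectedComponentIn_diff_inter_closure_nonempty hCc hU hCU hp⟩

theorem CutsBetween.diff_union [T2Space X] {S X0 X1 U0 U1 : Set X} (hcut : CutsBetween S X0 X1)
    (hd : Disjoint X0 X1) (hU0 : IsOpen U0) (hU1 : IsOpen U1) (hU0X0 : closure U0 ⊆ X0)
    (hU1X1 : closure U1 ⊆ X1) : CutsBetween (S \ (U0 ∪ U1)) U0 U1 := by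
  intro C hCc hC hCU0 ⟨p, hpC, hpU1⟩
  have hpU0 : p ∉ U0 := fun h =>
    hd.notMem_of_mem_left (hU0X0 (subset_closure h)) (hU1X1 (subset_closure hpU1))
  obtain ⟨K, hKc, hK, hpK, hKC, q, hqK, hqU0⟩ :=
    hC.exists_isConnected_subset_diff_inter_closure_nonempty hCc hU0 hCU0 ⟨hpC, hpU0⟩
  have hqU1 : q ∉ U1 := fun h => hd.notMem_of_mem_left (hU0X0 hqU0) (hU1X1 (subset_closure h))
  obtain ⟨L, hLc, hL, hqL, hLK, r, hrL, hrU1⟩ :=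
    hK.exists_isConnected_subset_diff_inter_closure_nonempty hKc hU1 ⟨p, hpK, hpU1⟩ ⟨hqK, hqU1⟩
  obtain ⟨s, hsL, hsS⟩ := hcut L hLc hL ⟨q, hqL, hU0X0 hqU0⟩ ⟨r, hrL, hU1X1 hrU1⟩
  have hsK := hLK hsL
  have hsC := hKC hsK.1
  exact ⟨s, hsC.1, hsS, fun h => h.elim hsC.2 hsK.2⟩

theorem exists_isOpen_nonempty_closure_subset_of_nonempty_interior [RegularSpace X] {A : Set X}
    (hA : (interior A).Nonempty) :
    ∃ U V : Set X, IsOpen U ∧ IsOpen V ∧ V.Nonempty ∧ closure V ⊆ U ∧ closure U ⊆ A := by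
  obtain ⟨x, hx⟩ := hA
  obtain ⟨U, ⟨hxU, hU⟩, hUA⟩ :=
    (hasBasis_opens_closure x).mem_iff.1 (mem_interior_iff_mem_nhds.1 hx)
  obtain ⟨V, ⟨hxV, hV⟩, hVU⟩ := (hasBasis_opens_closure x).mem_iff.1 (hU.mem_nhds hxU)
  exact ⟨U, V, hU, hV, ⟨x, hxV⟩, hVU, hUA⟩

end

theorem mazur1_general {X : Type*} [TopologicalSpace X] [CompactSpace X] [T2Space X]
    (X0 X1 : Set X) (S : Set X)
    (hd : Disjoint X0 X1) (hi0 : (interior X0).Nonempty) (hi1 : (interior X1).Nonempty)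
    (hcut : ∀ C : Set X, IsCompact C → IsConnected C → (C ∩ X0).Nonempty →
      (C ∩ X1).Nonempty → (C ∩ S).Nonempty) :
    ∃ U0 V0 U1 V1 : Set X, IsOpen U0 ∧ IsOpen V0 ∧ IsOpen U1 ∧ IsOpen V1 ∧
      V0.Nonempty ∧ V1.Nonempty ∧
      closure V0 ⊆ U0 ∧ U0 ⊆ X0 ∧ closure V1 ⊆ U1 ∧ U1 ⊆ X1 ∧
      ∀ C : Set X, IsCompact C → IsConnected C → (C ∩ closure V0).Nonempty →
        (C ∩ closure V1).Nonempty → (C ∩ (S \ (U0 ∪ U1))).Nonempty := by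
  obtain ⟨U0, V0, hU0, hV0, hV0ne, hV0U0, hU0X0⟩ :=
    exists_isOpen_nonempty_closure_subset_of_nonempty_interior hi0
  obtain ⟨U1, V1, hU1, hV1, hV1ne, hV1U1, hU1X1⟩ :=
    exists_isOpen_nonempty_closure_subset_of_nonempty_interior hi1
  exact ⟨U0, V0, U1, V1, hU0, hV0, hU1, hV1, hV0ne, hV1ne, hV0U0, subset_closure.trans hU0X0,
    hV1U1, subset_closure.trans hU1X1,
    (CutsBetween.diff_union hcut hd hU0 hU1 hU0X0 hU1X1).mono hV0U0 hV1U1⟩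

/-- Lemma 3.3 of the paper. -/
theorem mazur1 {X : Type*} [TopologicalSpace X] [CompactSpace X] [T2Space X]
    (X0 X1 : Set X) (S : Set X) (h0 : IsClosed X0) (h1 : IsClosed X1)
    (hd : Disjoint X0 X1) (hi0 : (interior X0).Nonempty) (hi1 : (interior X1).Nonempty)
    (hcut : ∀ C : Set X, IsCompact C → IsConnected C → (C ∩ X0).Nonempty →
      (C ∩ X1).Nonempty → (C ∩ S).Nonempty) :
    ∃ U0 V0 U1 V1 : Set X, IsOpen U0 ∧ IsOpen V0 ∧ IsOpen U1 ∧ IsOpen V1 ∧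
      V0.Nonempty ∧ V1.Nonempty ∧
      closure V0 ⊆ U0 ∧ U0 ⊆ X0 ∧ closure V1 ⊆ U1 ∧ U1 ⊆ X1 ∧
      ∀ C : Set X, IsCompact C → IsConnected C → (C ∩ closure V0).Nonempty →
        (C ∩ closure V1).Nonempty → (C ∩ (S \ (U0 ∪ U1))).Nonempty :=
  mazur1_general X0 X1 S hd hi0 hi1 hcut
end

section
/- Every compact Hausdorff Mazurkiewicz manifold with respect to an admissible class 𝒞 is a strong Cantor manifold with respect to 𝒞. -/
/-!
By Baire's theorem some piece `F i` has nonempty interior, and since the interiors of the pieces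
are dense, so does some `F j`, `j ≠ i`, at a point outside `F i`. Closed neighbourhoods inside
these interiors are disjoint, so the Mazurkiewicz property yields a continuum `K` joining them
and avoiding the Fσ set `⋃_{i ≠ j} F i ∩ F j`. The traces `K ∩ F k` then split `K` into countably
many pairwise disjoint closed sets, two of them nonempty, against Sierpiński's theorem.

Sierpiński's theorem is proved by shrinking: by boundary bumping, a continuum meeting two pieces
contains a subcontinuum that still meets two pieces but misses the `n`-th one. The nested
continua obtained for `n = 0, 1, 2, …` have a common point by compactness, which lies in no piece.
-/

/-- `T` is an `F_σ`-subset of `S` (in the subspace `S`): a countable union of sets closed in `S`. -/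
def FsigmaIn {X : Type*} [TopologicalSpace X] (T S : Set X) : Prop :=
  T ⊆ S ∧ ∃ f : ℕ → Set X, (∀ n, ∃ c : Set X, IsClosed c ∧ f n = c ∩ S) ∧ T = ⋃ n, f n

/-- `X` is a strong Cantor manifold with respect to the class `C`. -/
def StrongCantorManifold (X : Type*) [TopologicalSpace X] (C : Set X → Prop) : Prop :=
  ¬ ∃ F : ℕ → Set X, (∀ i, IsClosed (F i) ∧ F i ≠ Set.univ) ∧ (⋃ i, F i) = Set.univ ∧
    C (⋃ i, ⋃ j, ⋃ (_ : i ≠ j), F i ∩ F j)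

open Set Function

section Sierpinski

variable {Y ι : Type*}

def MeetsTwo (D : ι → Set Y) (S : Set Y) : Prop :=
  ∃ a b, a ≠ b ∧ (S ∩ D a).Nonempty ∧ (S ∩ D b).Nonempty

theorem MeetsTwo.nonempty {D : ι → Set Y} {S : Set Y} (h : MeetsTwo D S) : S.Nonempty := by
  obtain ⟨_, _, _, ⟨z, hz, _⟩, _⟩ := h
  exact ⟨z, hz⟩

theorem meetsTwo_preimage_iff {α : Type*} {f : α → Y} {D : ι → Set Y} {S : Set α} :
    MeetsTwo (fun i => f ⁻¹' D i) S ↔ MeetsTwo D (f '' S) := by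
  simp only [MeetsTwo, ← image_inter_preimage, image_nonempty]

variable [TopologicalSpace Y]

theorem exists_isClopen_mem_disjoint_of_disjoint_connectedComponent [CompactSpace Y] [T2Space Y]
    {x : Y} {B : Set Y} (hB : IsClosed B) (h : Disjoint (connectedComponent x) B) :
    ∃ V, IsClopen V ∧ x ∈ V ∧ Disjoint V B := by
  rw [connectedComponent_eq_iInter_isClopen, disjoint_iff_inter_eq_empty, inter_comm] at h
  obtain ⟨t, ht⟩ := hB.isCompact.elim_finite_subfamily_closed
    (fun s : {s : Set Y // IsClopen s ∧ x ∈ s} => (s : Set Y)) (fun s => s.2.1.1) h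
  exact ⟨⋂ s ∈ t, (s : Set Y), isClopen_biInter_finset fun s _ => s.2.1,
    mem_iInter₂.2 fun s _ => s.2.2, by rwa [disjoint_iff_inter_eq_empty, inter_comm]⟩

/-- The boundary bumping theorem. -/
theorem IsClosed.exists_isConnected_mem_inter_frontier [CompactSpace Y] [T2Space Y]
    [ConnectedSpace Y] {F : Set Y} (hF : IsClosed F) (hFY : F ≠ univ) {x : Y} (hx : x ∈ F) :
    ∃ T ⊆ F, IsCompact T ∧ IsConnected T ∧ x ∈ T ∧ (T ∩ frontier F).Nonempty := by
  have : CompactSpace F := isCompact_iff_compactSpace.mp hF.isCompact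
  refine ⟨(↑) '' connectedComponent (⟨x, hx⟩ : F), Subtype.coe_image_subset _ _,
    isClosed_connectedComponent.isCompact.image continuous_subtype_val,
    isConnected_connectedComponent.image _ continuous_subtype_val.continuousOn,
    ⟨_, mem_connectedComponent, rfl⟩, ?_⟩
  rw [← image_inter_preimage, image_nonempty, ← not_disjoint_iff_nonempty_inter]
  intro hdisj
  obtain ⟨V, hV, hxV, hVfr⟩ := exists_isClopen_mem_disjoint_of_disjoint_connectedComponent
    (isClosed_frontier.preimage continuous_subtype_val) hdisj
  obtain ⟨O, hO, rfl⟩ := isOpen_induced_iff.mp hV.isOpen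
  have hW_closed : IsClosed (F ∩ O) := by
    rw [← Subtype.image_preimage_coe]
    exact (hV.isClosed.isCompact.image continuous_subtype_val).isClosed
  have hW_eq : F ∩ O = interior F ∩ O := by
    refine subset_antisymm (fun z hz => ⟨?_, hz.2⟩) (inter_subset_inter_left _ interior_subset)
    by_contra hzi
    have hzV : (⟨z, hz.1⟩ : F) ∈ ((↑) : F → Y) ⁻¹' O := hz.2
    exact disjoint_left.mp hVfr hzV ⟨subset_closure hz.1, hzi⟩
  have hW : IsClopen (F ∩ O) := ⟨hW_closed, hW_eq ▸ isOpen_interior.inter hO⟩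
  have hxW : x ∈ F ∩ O := ⟨hx, hxV⟩
  exact hFY (eq_univ_of_univ_subset ((hW.eq_univ ⟨x, hxW⟩).symm.subset.trans inter_subset_left))

theorem exists_isConnected_disjoint_meetsTwo [CompactSpace Y] [T2Space Y] [ConnectedSpace Y]
    {D : ι → Set Y} (hD : ∀ i, IsClosed (D i)) (hdisj : Pairwise (Disjoint on D))
    (hcov : ⋃ i, D i = univ) (h2 : MeetsTwo D univ) (n : ι) :
    ∃ T, IsCompact T ∧ IsConnected T ∧ Disjoint T (D n) ∧ MeetsTwo D T := by
  rcases (D n).eq_empty_or_nonempty with hn | hn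
  · exact ⟨univ, isCompact_univ, isConnected_univ, by simp [hn], h2⟩
  obtain ⟨m, hmn, x, hx⟩ : ∃ m, m ≠ n ∧ (D m).Nonempty := by
    obtain ⟨a, b, hab, ha, hb⟩ := h2
    rcases eq_or_ne a n with rfl | han
    · exact ⟨b, hab.symm, by simpa using hb⟩
    · exact ⟨a, han, by simpa using ha⟩
  -- The component of `x ∈ D m` in `Uᶜ` reaches `frontier U ⊆ closure U`, which misses `D m`.
  obtain ⟨U, hU, hnU, hUm⟩ :=
    normal_exists_closure_subset (hD n) (hD m).isOpen_compl (hdisj hmn.symm).subset_compl_right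
  obtain ⟨T, hTU, hTc, hTconn, hxT, y, hyT, hyU⟩ :=
    hU.isClosed_compl.exists_isConnected_mem_inter_frontier (compl_ne_univ.mpr (hn.mono hnU))
      (fun hxU => hUm (subset_closure hxU) hx)
  obtain ⟨b, hyb⟩ := mem_iUnion.mp (hcov.symm ▸ mem_univ y)
  refine ⟨T, hTc, hTconn, (disjoint_compl_left.mono_left hTU).mono_right hnU,
    m, b, ?_, ⟨x, hxT, hx⟩, ⟨y, hyT, hyb⟩⟩
  rintro rfl
  rw [frontier_compl] at hyU
  exact hUm (frontier_subset_closure hyU) hyb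

theorem IsCompact.exists_subset_isConnected_disjoint_meetsTwo [T2Space Y] {K : Set Y}
    (hK : IsCompact K) (hKc : IsConnected K) {D : ι → Set Y} (hD : ∀ i, IsClosed (D i))
    (hdisj : Pairwise (Disjoint on D)) (hcov : K ⊆ ⋃ i, D i) (h2 : MeetsTwo D K) (n : ι) :
    ∃ T ⊆ K, IsCompact T ∧ IsConnected T ∧ Disjoint T (D n) ∧ MeetsTwo D T := by
  have : CompactSpace K := isCompact_iff_compactSpace.mp hK
  have : ConnectedSpace K := Subtype.connectedSpace hKc
  have hcov' : ⋃ i, ((↑) : K → Y) ⁻¹' D i = univ := by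
    rwa [← preimage_iUnion, preimage_eq_univ_iff, Subtype.range_coe]
  have h2' : MeetsTwo (fun i => ((↑) : K → Y) ⁻¹' D i) univ := by
    rwa [meetsTwo_preimage_iff, image_univ, Subtype.range_coe]
  obtain ⟨T, hTc, hTconn, hTn, hT2⟩ := exists_isConnected_disjoint_meetsTwo
    (fun i => (hD i).preimage continuous_subtype_val) (fun a b hab => (hdisj hab).preimage _)
    hcov' h2' n
  refine ⟨(↑) '' T, Subtype.coe_image_subset _ _, hTc.image continuous_subtype_val,
    hTconn.image _ continuous_subtype_val.continuousOn, ?_, meetsTwo_preimage_iff.mp hT2⟩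
  rw [disjoint_iff_inter_eq_empty, ← image_inter_preimage, image_eq_empty,
    ← disjoint_iff_inter_eq_empty]
  exact hTn

/-- Sierpiński's theorem. -/
theorem IsCompact.not_meetsTwo_of_pairwise_disjoint [T2Space Y] {K : Set Y} (hK : IsCompact K)
    (hKc : IsConnected K) {D : ℕ → Set Y} (hD : ∀ n, IsClosed (D n))
    (hdisj : Pairwise (Disjoint on D)) (hcov : K ⊆ ⋃ n, D n) : ¬ MeetsTwo D K := by
  intro h2
  have shrink : ∀ S, (IsCompact S ∧ IsConnected S ∧ S ⊆ K ∧ MeetsTwo D S) → ∀ n : ℕ,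
      ∃ T ⊆ S, (IsCompact T ∧ IsConnected T ∧ T ⊆ K ∧ MeetsTwo D T) ∧ Disjoint T (D n) := by
    rintro S ⟨hSc, hSconn, hSK, hS2⟩ n
    obtain ⟨T, hTS, hTc, hTconn, hTn, hT2⟩ :=
      hSc.exists_subset_isConnected_disjoint_meetsTwo hSconn hD hdisj (hSK.trans hcov) hS2 n
    exact ⟨T, hTS, ⟨hTc, hTconn, hTS.trans hSK, hT2⟩, hTn⟩
  choose! next hnext_sub hnext hnext_disj using shrink
  let S : ℕ → Set Y := fun n => Nat.rec K (fun n T => next T n) n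
  have hS : ∀ n, IsCompact (S n) ∧ IsConnected (S n) ∧ S n ⊆ K ∧ MeetsTwo D (S n) :=
    fun n => Nat.rec ⟨hK, hKc, subset_rfl, h2⟩ (fun n ih => hnext _ ih n) n
  obtain ⟨z, hz⟩ := IsCompact.nonempty_iInter_of_sequence_nonempty_isCompact_isClosed S
    (fun n => hnext_sub _ (hS n) n) (fun n => (hS n).2.2.2.nonempty) hK
    (fun n => (hS n).1.isClosed)
  obtain ⟨n, hzn⟩ := mem_iUnion.mp (hcov (mem_iInter.mp hz 0))
  exact disjoint_left.mp (hnext_disj _ (hS n) n) (mem_iInter.mp hz (n + 1)) hzn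

end Sierpinski

section Baire

variable {X : Type*} [TopologicalSpace X]

theorem fsigmaIn_univ_of_isGδ_compl {T : Set X} (hT : IsGδ Tᶜ) : FsigmaIn T univ := by
  obtain ⟨f, hf, hTf⟩ := isGδ_iff_eq_iInter_nat.mp hT
  refine ⟨subset_univ T, fun n => (f n)ᶜ,
    fun n => ⟨_, (hf n).isClosed_compl, (inter_univ _).symm⟩, ?_⟩
  rw [← compl_iInter, ← hTf, compl_compl]

theorem exists_disjoint_isClosed_subsets_of_iUnion_eq_univ [BaireSpace X] [RegularSpace X]
    {F : ℕ → Set X} (hF : ∀ i, IsClosed (F i)) (hFY : ∀ i, F i ≠ univ) (hcov : ⋃ i, F i = univ) :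
    ∃ i j, i ≠ j ∧ ∃ X₀ ⊆ F i, ∃ X₁ ⊆ F j, IsClosed X₀ ∧ IsClosed X₁ ∧ Disjoint X₀ X₁ ∧
      (interior X₀).Nonempty ∧ (interior X₁).Nonempty := by
  obtain ⟨u, -⟩ := (ne_univ_iff_exists_notMem _).mp (hFY 0)
  have : Nonempty X := ⟨u⟩
  obtain ⟨i, x, hx⟩ := nonempty_interior_of_iUnion_of_closed hF hcov
  obtain ⟨y, hyi, hy⟩ := (dense_iUnion_interior_of_closed hF hcov).inter_open_nonempty (F i)ᶜ
    (hF i).isOpen_compl (nonempty_compl.mpr (hFY i))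
  obtain ⟨j, hyj⟩ := mem_iUnion.mp hy
  have hij : i ≠ j := by
    rintro rfl
    exact hyi (interior_subset hyj)
  obtain ⟨X₀, hX₀, hX₀c, hX₀i⟩ := exists_mem_nhds_isClosed_subset (isOpen_interior.mem_nhds hx)
  obtain ⟨X₁, hX₁, hX₁c, hX₁j⟩ := exists_mem_nhds_isClosed_subset
    ((isOpen_interior.inter (hF i).isOpen_compl).mem_nhds ⟨hyj, hyi⟩)
  refine ⟨i, j, hij, X₀, hX₀i.trans interior_subset, X₁,
    (hX₁j.trans inter_subset_left).trans interior_subset, hX₀c, hX₁c,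
    disjoint_left.mpr fun z hz₀ hz₁ => (hX₁j hz₁).2 (interior_subset (hX₀i hz₀)),
    ⟨x, mem_interior_iff_mem_nhds.mpr hX₀⟩, ⟨y, mem_interior_iff_mem_nhds.mpr hX₁⟩⟩

end Baire

theorem mazurkiewicz_implies_strongCantor_general {X : Type*} [TopologicalSpace X] [CompactSpace X]
    [T2Space X] (C : Set X → Prop)
    (hMaz : ∀ X0 X1 : Set X, IsClosed X0 → IsClosed X1 → Disjoint X0 X1 →
      (interior X0).Nonempty → (interior X1).Nonempty →
      ∀ F : Set X, FsigmaIn F Set.univ → C F →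
        ∃ K : Set X, K ⊆ Set.univ \ F ∧ IsCompact K ∧ IsConnected K ∧
          (K ∩ X0).Nonempty ∧ (K ∩ X1).Nonempty) :
    StrongCantorManifold X C := by
  rintro ⟨F, hF, hcov, hC⟩
  obtain ⟨i, j, hij, X₀, hX₀F, X₁, hX₁F, hX₀, hX₁, hdisj, hint₀, hint₁⟩ :=
    exists_disjoint_isClosed_subsets_of_iUnion_eq_univ (fun i => (hF i).1) (fun i => (hF i).2) hcov
  have hFσ : FsigmaIn (⋃ i, ⋃ j, ⋃ (_ : i ≠ j), F i ∩ F j) univ := by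
    refine fsigmaIn_univ_of_isGδ_compl ?_
    simp only [compl_iUnion]
    exact .iInter fun i => .iInter fun j => .iInter fun _ =>
      ((hF i).1.inter (hF j).1).isOpen_compl.isGδ
  obtain ⟨K, hKF, hK, hKc, ⟨x, hxK, hx⟩, ⟨y, hyK, hy⟩⟩ :=
    hMaz X₀ X₁ hX₀ hX₁ hdisj hint₀ hint₁ _ hFσ hC
  refine hK.not_meetsTwo_of_pairwise_disjoint hKc (D := fun k => K ∩ F k)
    (fun k => hK.isClosed.inter (hF k).1) ?_ ?_
    ⟨i, j, hij, ⟨x, hxK, hxK, hX₀F hx⟩, ⟨y, hyK, hyK, hX₁F hy⟩⟩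
  · exact fun a b hab => disjoint_left.mpr fun z ⟨hzK, hza⟩ ⟨_, hzb⟩ =>
      (hKF hzK).2 (mem_iUnion₂.mpr ⟨a, b, mem_iUnion.mpr ⟨hab, hza, hzb⟩⟩)
  · intro z hz
    obtain ⟨k, hzk⟩ := mem_iUnion.mp (hcov.symm ▸ mem_univ z)
    exact mem_iUnion.mpr ⟨k, hz, hzk⟩

/-- Proposition 2.1: every compact Hausdorff Mazurkiewicz manifold with respect to an admissible
class `C` is a strong Cantor manifold with respect to `C`. -/
theorem mazurkiewicz_implies_strongCantor {X : Type*} [TopologicalSpace X] [CompactSpace X]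
    [T2Space X] (C : Set X → Prop)
    (hChomeo : ∀ S T : Set X, C S → Nonempty (S ≃ₜ T) → C T)
    (hCFsig : ∀ S T : Set X, C S → FsigmaIn T S → C T)
    (hMaz : ∀ X0 X1 : Set X, IsClosed X0 → IsClosed X1 → Disjoint X0 X1 →
      (interior X0).Nonempty → (interior X1).Nonempty →
      ∀ F : Set X, FsigmaIn F Set.univ → C F →
        ∃ K : Set X, K ⊆ Set.univ \ F ∧ IsCompact K ∧ IsConnected K ∧
          (K ∩ X0).Nonempty ∧ (K ∩ X1).Nonempty) :
    StrongCantorManifold X C :=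
  mazurkiewicz_implies_strongCantor_general C hMaz
end
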